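/- For every odd m ≥ 3, setting n = m(m+1)/2, there exists a subgroup K of H = (Z_2)^{n+1}/⟨(1,...,1)⟩ with H/K ≅ (Z_2)^m such that K contains no nontrivial element of the form φ_k or φ_iφ_j. -/

import Mathlib

open scoped BigOperators

/-- Vectors of length `n+1` over `ZMod p`. -/
abbrev GFVec (p n : ℕ) := Fin (n + 1) → ZMod p

/-- The subgroup generated by the constant vector `(1,...,1)`. -/
def diagSub (p n : ℕ) : AddSubgroup (GFVec p n) :=
  AddSubgroup.zmultiples (fun _ => (1 : ZMod p))

/-- The group `H = (Z_p)^{n+1} / ⟨(1,...,1)⟩`. -/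
abbrev GFGroup (p n : ℕ) := GFVec p n ⧸ diagSub p n

/-- The canonical generator `φ_i`, the image of the `i`-th standard basis vector. -/
def gen (p n : ℕ) (i : Fin (n + 1)) : GFGroup p n :=
  QuotientAddGroup.mk (Pi.single i (1 : ZMod p))

/-- An element of `H` is forbidden (acts with fixed points) if it is a nontrivial-looking
product `φ_{i_1}^{l_1} ⋯ φ_{i_j}^{l_j}` with `1 ≤ j ≤ d`, distinct indices and
exponents `l_t ≢ 0 (mod p)`. -/
def IsForbidden (p n d : ℕ) (x : GFGroup p n) : Prop :=
  ∃ (s : Finset (Fin (n + 1))) (l : Fin (n + 1) → ZMod p),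
    s.Nonempty ∧ s.card ≤ d ∧ (∀ i ∈ s, l i ≠ 0) ∧
    x = QuotientAddGroup.mk (fun i => if i ∈ s then l i else 0)

/-!
Over `ZMod 2`, a generator-wise assignment `φ_k ↦ f k ∈ V` descends to `H` exactly when the
`f k` sum to zero, and a product of one or two distinct generators lies in the kernel only if
some `f k` vanishes or two of them coincide. So it suffices to find `n + 1` distinct nonzero
vectors of `V = (ZMod 2)^m` that span `V` and sum to zero. The paper's choice, the vectors
`e_k`, `e_i + e_j` and `e_1 + ⋯ + e_m`, are the indicators of the subsets of `Fin m` of size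
`1`, `2` and `m`; each coordinate lies in `1 + (m - 1) + 1 = m + 1` of them, an even number
when `m` is odd.
-/

open Finset

section Lift

variable {p n : ℕ} {V : Type*} [AddCommGroup V] [Module (ZMod p) V]

noncomputable def liftGen (f : Fin (n + 1) → V) (hf : ∑ k, f k = 0) : GFGroup p n →+ V :=
  QuotientAddGroup.lift (diagSub p n) (Fintype.linearCombination (ZMod p) f).toAddMonoidHom <|
    AddSubgroup.zmultiples_le.mpr <| by
      simp [Fintype.linearCombination_apply, hf]

@[simp]
lemma liftGen_gen (f : Fin (n + 1) → V) (hf : ∑ k, f k = 0) (k : Fin (n + 1)) :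
    liftGen f hf (gen p n k) = f k := by
  change Fintype.linearCombination (ZMod p) f (Pi.single k 1) = f k
  simp [Fintype.linearCombination_apply_single]

lemma liftGen_surjective (f : Fin (n + 1) → V) (hf : ∑ k, f k = 0)
    (hspan : Submodule.span (ZMod p) (Set.range f) = ⊤) :
    Function.Surjective (liftGen (p := p) f hf) := fun v =>
  let ⟨w, hw⟩ := (span_range_eq_top_iff_surjective_fintypeLinearCombination _ _).mp hspan v
  ⟨QuotientAddGroup.mk w, hw⟩

end Lift

lemma IsForbidden.exists_eq_sum_gen {n d : ℕ} {x : GFGroup 2 n} (hx : IsForbidden 2 n d x) :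
    ∃ s : Finset (Fin (n + 1)), s.Nonempty ∧ s.card ≤ d ∧ x = ∑ i ∈ s, gen 2 n i := by
  obtain ⟨s, l, hs, hcard, hl, rfl⟩ := hx
  refine ⟨s, hs, hcard, ?_⟩
  have hl1 : ∀ i ∈ s, l i = 1 := fun i hi => Fin.eq_one_of_ne_zero (l i) (hl i hi)
  simp only [gen, ← QuotientAddGroup.mk'_apply, ← map_sum]
  congr 1
  ext j
  by_cases hj : j ∈ s <;> simp [hj, hl1, Finset.sum_apply, Pi.single_apply]

lemma sum_ne_zero_of_card_le_two {ι V : Type*} [AddCommGroup V] [Module (ZMod 2) V]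
    {f : ι → V} (hinj : Function.Injective f) (hne : ∀ i, f i ≠ 0) {s : Finset ι}
    (hs : s.Nonempty) (hcard : s.card ≤ 2) : ∑ i ∈ s, f i ≠ 0 := by
  classical
  obtain h1 | h2 : s.card = 1 ∨ s.card = 2 := by have := hs.card_pos; omega
  · obtain ⟨a, rfl⟩ := Finset.card_eq_one.mp h1
    simpa using hne a
  · obtain ⟨a, b, hab, rfl⟩ := Finset.card_eq_two.mp h2
    rw [Finset.sum_pair hab, ← ZModModule.sub_eq_add, sub_ne_zero]
    exact hinj.ne hab

theorem exists_addSubgroup_of_finset {n : ℕ} {V : Type*} [AddCommGroup V] [Module (ZMod 2) V]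
    (T : Finset V) (hcard : T.card = n + 1) (h0 : (0 : V) ∉ T) (hsum : ∑ v ∈ T, v = 0)
    (hspan : Submodule.span (ZMod 2) (T : Set V) = ⊤) :
    ∃ K : AddSubgroup (GFGroup 2 n),
      Nonempty ((GFGroup 2 n ⧸ K) ≃+ V) ∧ ∀ x ∈ K, IsForbidden 2 n 2 x → x = 0 := by
  let e : Fin (n + 1) ≃ T := (Fintype.equivFinOfCardEq (by simpa using hcard)).symm
  let f : Fin (n + 1) → V := fun k => e k
  have hf : ∑ k, f k = 0 :=
    (Equiv.sum_comp e (fun v : T => (v : V))).trans ((Finset.sum_coe_sort T id).trans hsum)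
  have hrange : Set.range f = T := by
    rw [show f = Subtype.val ∘ e from rfl, Set.range_comp, e.range_eq_univ, Set.image_univ,
      Subtype.range_coe]
  have hinj : Function.Injective f := Subtype.val_injective.comp e.injective
  have hne : ∀ k, f k ≠ 0 := fun k h => h0 (h ▸ (e k).2)
  let θ := liftGen (p := 2) f hf
  refine ⟨θ.ker, ⟨QuotientAddGroup.quotientKerEquivOfSurjective θ
    (liftGen_surjective f hf (hrange ▸ hspan))⟩, fun x hx hforb => ?_⟩
  obtain ⟨s, hs, hscard, rfl⟩ := hforb.exists_eq_sum_gen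
  refine absurd ?_ (sum_ne_zero_of_card_le_two hinj hne hs hscard)
  simpa [θ, map_sum] using hx

lemma Finset.indicator_one_injective {α R : Type*} [MulZeroOneClass R] [Nontrivial R] :
    Function.Injective fun s : Finset α => (s : Set α).indicator (1 : α → R) :=
  fun _ _ h => Finset.coe_injective (Set.indicator_one_inj R h)

section SubsetsOfCard

variable {α : Type*} [Fintype α]

lemma pairwiseDisjoint_powersetCard_univ (ks : Finset ℕ) :
    (ks : Set ℕ).PairwiseDisjoint (powersetCard · (univ : Finset α)) :=
  fun _ _ _ _ hij => pairwise_disjoint_powersetCard univ hij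

variable [DecidableEq α]

variable (α) in
def subsetsOfCard (ks : Finset ℕ) : Finset (Finset α) :=
  ks.biUnion (powersetCard · univ)

lemma card_subsetsOfCard (ks : Finset ℕ) :
    #(subsetsOfCard α ks) = ∑ k ∈ ks, (Fintype.card α).choose k := by
  simp [subsetsOfCard, card_biUnion (pairwiseDisjoint_powersetCard_univ ks)]

lemma sum_indicator_powersetCard {R : Type*} [AddCommMonoidWithOne R] {k : ℕ} (hk : 1 ≤ k) :
    ∑ s ∈ powersetCard k (univ : Finset α), (s : Set α).indicator (1 : α → R) =
      fun _ => ((Fintype.card α - 1).choose (k - 1) : R) := by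
  ext a
  have hcount : #{s ∈ powersetCard k univ | a ∈ s} = (Fintype.card α - 1).choose (k - 1) := by
    simpa using card_filter_powersetCard_subset {a} univ k (subset_univ _) (by simpa using hk)
  simp [Finset.sum_apply, Set.indicator_apply, ← hcount]

lemma sum_indicator_subsetsOfCard {R : Type*} [AddCommMonoidWithOne R] {ks : Finset ℕ}
    (hks : 0 ∉ ks) :
    ∑ s ∈ subsetsOfCard α ks, (s : Set α).indicator (1 : α → R) =
      fun _ => ((∑ k ∈ ks, (Fintype.card α - 1).choose (k - 1) : ℕ) : R) := by
  rw [subsetsOfCard, sum_biUnion (pairwiseDisjoint_powersetCard_univ ks)]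
  ext a
  simp only [Finset.sum_apply, Nat.cast_sum]
  refine Finset.sum_congr rfl fun k hk => ?_
  rw [← Finset.sum_apply, sum_indicator_powersetCard]
  exact Nat.one_le_iff_ne_zero.mpr (ne_of_mem_of_not_mem hk hks)

variable (α) (R : Type*) [Semiring R] [Nontrivial R]

noncomputable def indicatorsOfCard (ks : Finset ℕ) : Finset (α → R) :=
  (subsetsOfCard α ks).map ⟨_, Finset.indicator_one_injective⟩

variable {α R}

lemma card_indicatorsOfCard (ks : Finset ℕ) :
    #(indicatorsOfCard α R ks) = ∑ k ∈ ks, (Fintype.card α).choose k := by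
  rw [indicatorsOfCard, card_map, card_subsetsOfCard]

lemma zero_notMem_indicatorsOfCard {ks : Finset ℕ} (hks : 0 ∉ ks) :
    (0 : α → R) ∉ indicatorsOfCard α R ks := by
  simp only [indicatorsOfCard, subsetsOfCard, mem_map, mem_biUnion, mem_powersetCard_univ]
  rintro ⟨s, ⟨k, hk, rfl⟩, hs⟩
  obtain ⟨a, ha⟩ : s.Nonempty := card_pos.mp (Nat.pos_of_ne_zero (ne_of_mem_of_not_mem hk hks))
  simpa [ha] using congrFun hs a

lemma sum_indicatorsOfCard {ks : Finset ℕ} (hks : 0 ∉ ks) :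
    ∑ v ∈ indicatorsOfCard α R ks, v =
      fun _ => ((∑ k ∈ ks, (Fintype.card α - 1).choose (k - 1) : ℕ) : R) := by
  rw [indicatorsOfCard, sum_map]
  exact sum_indicator_subsetsOfCard hks

lemma span_indicatorsOfCard {ks : Finset ℕ} (hks : 1 ∈ ks) :
    Submodule.span R (indicatorsOfCard α R ks : Set (α → R)) = ⊤ := by
  refine eq_top_iff.mpr ((Pi.basisFun R α).span_eq.ge.trans (Submodule.span_mono ?_))
  rintro _ ⟨a, rfl⟩
  simp only [indicatorsOfCard, subsetsOfCard, coe_map, Set.mem_image, mem_coe, mem_biUnion]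
  exact ⟨{a}, ⟨1, hks, by simp⟩, by simp⟩

end SubsetsOfCard

/-- for every odd `m ≥ 3`, with `n = m(m+1)/2`, there is a subgroup
`K` of `H = (Z_2)^{n+1}/⟨(1,…,1)⟩` with `H/K ≅ (Z_2)^m` avoiding all nontrivial
`φ_k` and `φ_iφ_j`. -/
theorem stmt_9 (m n : ℕ) (hm : 3 ≤ m) (hodd : Odd m)
    (hn : 2 * n = m * (m + 1)) :
    ∃ K : AddSubgroup (GFGroup 2 n),
      Nonempty ((GFGroup 2 n ⧸ K) ≃+ (Fin m → ZMod 2)) ∧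
      ∀ x ∈ K, IsForbidden 2 n 2 x → x = 0 := by
  have hsizes (f : ℕ → ℕ) : ∑ k ∈ ({1, 2, m} : Finset ℕ), f k = f 1 + f 2 + f m := by
    rw [sum_insert (by simp; omega), sum_insert (by simp; omega), sum_singleton, add_assoc]
  have hks : 0 ∉ ({1, 2, m} : Finset ℕ) := by simp; omega
  have hcard : #(indicatorsOfCard (Fin m) (ZMod 2) {1, 2, m}) = n + 1 := by
    have htri : (m + 1).choose 2 = n := by
      have := Nat.add_one_mul_choose_eq m 1
      rw [Nat.choose_one_right] at this
      linarith
    rw [card_indicatorsOfCard, hsizes, Fintype.card_fin, Nat.choose_self, ← htri,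
      Nat.choose_succ_succ, Nat.choose_one_right]
  have hsum : ∑ v ∈ indicatorsOfCard (Fin m) (ZMod 2) {1, 2, m}, v = 0 := by
    have hdeg : ∑ k ∈ ({1, 2, m} : Finset ℕ), (m - 1).choose (k - 1) = m + 1 := by
      rw [hsizes]
      simp only [tsub_self, Nat.choose_zero_right, Nat.add_one_sub_one, Nat.choose_one_right,
        Nat.choose_self]
      omega
    rw [sum_indicatorsOfCard hks, Fintype.card_fin, hdeg,
      ZMod.natCast_eq_zero_iff_even.mpr hodd.add_one]
    rfl
  exact exists_addSubgroup_of_finset _ hcard (zero_notMem_indicatorsOfCard hks) hsum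
    (span_indicatorsOfCard (by simp))
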